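/- arXiv:1209.3597 — 2 statements merged into one kernel-verified Lean document; each statement's English description precedes it below -/
import Mathlib

section
/- Let $k_1 \geq 1$, $k_2 \geq 0$ and $k = k_1 + k_2$. Let $A : \mathbb{C}^{k_1} \to \mathbb{C}^{k_1}$ and $B : \mathbb{C}^{k_2} \to \mathbb{C}^{k_2}$ be linear maps with $A$ invertible and $\|B\| < \|A^{-1}\|^{-1}$, and set $\xi = 1 - \|B\|\,\|A^{-1}\| \in (0,1]$. Let $0 \leq \xi_0 \leq 1$ and $\delta > 0$ satisfy $\xi_0(1-\xi) + 2\delta(1+\xi_0)\|A^{-1}\| \leq 1$, $\|A^{-1}\|^{-1} - \delta(1+\xi_0) > 0$ and $(\xi_0\|B\| + \delta(1+\xi_0))\,(\|A^{-1}\|^{-1} - \delta(1+\xi_0))^{-1} \leq \xi_0$. Let $0 < R_0 \leq R_1$ and let $g : B_k(0,R_0) \to B_k(0,R_1)$ be holomorphic with $g(0) = 0$, $Dg(0)(x,y) = (Ax, By)$ (block diagonal with respect to the splitting $\mathbb{C}^k = \mathbb{C}^{k_1} \times \mathbb{C}^{k_2}$), and $\|Dg(w) - Dg(0)\| \leq \delta$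 for all $w \in B_k(0,R_0)$. Then for every $0 < R \leq R_0$ and every map $\phi : B_{k_2}(0,R) \to \mathbb{C}^{k_1}$ with $\phi(0) = 0$ and Lipschitz constant $\mathrm{Lip}(\phi) \leq \xi_0$, there exists a map $\psi : B_{k_2}\big(0, R/\max(1, \|B\| + 2\delta)\big) \to \mathbb{C}^{k_1}$ with $\mathrm{Lip}(\psi) \leq \xi_0$ such that $g(\mathrm{graph}(\psi)) \subseteq \mathrm{graph}(\phi)$, where $\mathrm{graph}(\chi) = \{(\chi(y), y) : y \in \mathrm{dom}(\chi)\} \subseteq \mathbb{C}^{k_1} \times \mathbb{C}^{k_2}$. -/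
/-!
For fixed `y`, the point `ψ y` is the fixed point of the Newton-type map
`x ↦ x - A⁻¹ ((g (x, y)).1 - φ (g (x, y)).2)`. By the mean value inequality `g` is `δ`-close to
the block-diagonal map `(A, B)`, and `φ` is `ξ₀`-Lipschitz, so this map contracts the closed ball
of radius `ξ₀ ‖y‖` into itself. The same estimate, applied to two points of the pulled-back graph,
shows that the cone `‖Δx‖ ≤ ξ₀ ‖Δy‖` is preserved, that is, `Lip ψ ≤ ξ₀`.
-/

open Metric Set
open scoped NNReal

theorem exists_isFixedPt_mem_closedBall {α : Type*} [MetricSpace α] [CompleteSpace α]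
    {f : α → α} {K : ℝ≥0} {c : α} {ρ : ℝ} (hK : K < 1)
    (hf : LipschitzOnWith K f (closedBall c ρ)) (hc : dist (f c) c ≤ (1 - K) * ρ) :
    ∃ x ∈ closedBall c ρ, Function.IsFixedPt f x := by
  have hK' : (K : ℝ) < 1 := hK
  have hρ : 0 ≤ ρ := nonneg_of_mul_nonneg_right (dist_nonneg.trans hc) (by linarith)
  have hmaps : MapsTo f (closedBall c ρ) (closedBall c ρ) := fun x hx ↦ by
    rw [mem_closedBall] at hx ⊢
    calc dist (f x) c ≤ dist (f x) (f c) + dist (f c) c := dist_triangle _ _ _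
      _ ≤ K * dist x c + (1 - K) * ρ :=
        add_le_add (hf.dist_le_mul x hx c (mem_closedBall_self hρ)) hc
      _ ≤ K * ρ + (1 - K) * ρ := by gcongr
      _ = ρ := by ring
  obtain ⟨x, hx, hfix, -⟩ := ContractingWith.exists_fixedPoint' isClosed_closedBall.isComplete
    hmaps ⟨hK, hf.mapsToRestrict hmaps⟩ (mem_closedBall_self hρ) (edist_ne_top c (f c))
  exact ⟨x, hx, hfix⟩

theorem mul_add_le_of_mul_inv_sub_le {a b d ξ : ℝ} (ha : 0 ≤ a) (hd : 0 ≤ d)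
    (hpos : 0 < a⁻¹ - d) (hle : (ξ * b + d) * (a⁻¹ - d)⁻¹ ≤ ξ) :
    a * (ξ * b + d) ≤ ξ * (1 - a * d) := by
  have ha' : a ≠ 0 := fun h ↦ by rw [h, inv_zero] at hpos; linarith
  have hle' : ξ * b + d ≤ ξ * (a⁻¹ - d) := by rwa [← div_eq_mul_inv, div_le_iff₀ hpos] at hle
  calc a * (ξ * b + d) ≤ a * (ξ * (a⁻¹ - d)) := by gcongr
    _ = ξ * (1 - a * d) := by field_simp

theorem mul_lt_one_of_mul_add_le {a b d ξ : ℝ} (ha : 0 ≤ a) (hb : 0 ≤ b) (hξ : 0 ≤ ξ)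
    (h : a * (ξ * b + d) ≤ ξ * (1 - a * d)) : a * d < 1 := by
  by_contra! hle
  nlinarith [mul_nonneg ha (mul_nonneg hξ hb), mul_nonneg hξ (sub_nonneg.2 hle)]

theorem Prod.norm_mk_of_norm_le_mul {E F : Type*} [SeminormedAddCommGroup E]
    [SeminormedAddCommGroup F] {x : E} {y : F} {ξ : ℝ≥0} (hξ : ξ ≤ 1) (hx : ‖x‖ ≤ ξ * ‖y‖) :
    ‖(x, y)‖ = ‖y‖ :=
  (Prod.norm_mk x y).trans <| max_eq_right <| hx.trans <|
    mul_le_of_le_one_left (norm_nonneg y) (by exact_mod_cast hξ)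

def graphOver {α β : Type*} (χ : β → α) (s : Set β) : Set (α × β) :=
  {p | p.2 ∈ s ∧ p.1 = χ p.2}

def graphDefect {𝕜 E X : Type*} [NontriviallyNormedField 𝕜] [NormedAddCommGroup E]
    [NormedSpace 𝕜 E] (A : E ≃L[𝕜] E) (φ : X → E) (g : E × X → E × X) (w : E × X) : E :=
  A.symm ((g w).1 - φ (g w).2)

theorem graphDefect_eq_zero_iff {𝕜 E X : Type*} [NontriviallyNormedField 𝕜]
    [NormedAddCommGroup E] [NormedSpace 𝕜 E] {A : E ≃L[𝕜] E} {φ : X → E} {g : E × X → E × X}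
    {w : E × X} : graphDefect A φ g w = 0 ↔ (g w).1 = φ (g w).2 := by
  rw [graphDefect, map_eq_zero_iff _ A.symm.injective, sub_eq_zero]

section

variable {𝕜 E₁ E₂ F₁ F₂ : Type*} [NontriviallyNormedField 𝕜]
  [NormedAddCommGroup E₁] [NormedSpace 𝕜 E₁] [NormedAddCommGroup E₂] [NormedSpace 𝕜 E₂]
  [NormedAddCommGroup F₁] [NormedSpace 𝕜 F₁] [NormedAddCommGroup F₂] [NormedSpace 𝕜 F₂]

namespace ApproximatesLinearOn

variable {g : E₁ × E₂ → F₁ × F₂} {L₁ : E₁ →L[𝕜] F₁} {L₂ : E₂ →L[𝕜] F₂}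
  {s : Set (E₁ × E₂)} {δ : ℝ≥0} {w₁ w₂ : E₁ × E₂}

theorem norm_fst_sub_sub_le (hg : ApproximatesLinearOn g (L₁.prodMap L₂) s δ)
    (hw₁ : w₁ ∈ s) (hw₂ : w₂ ∈ s) :
    ‖(g w₁).1 - (g w₂).1 - L₁ (w₁.1 - w₂.1)‖ ≤ δ * ‖w₁ - w₂‖ :=
  (norm_fst_le (g w₁ - g w₂ - L₁.prodMap L₂ (w₁ - w₂))).trans (hg w₁ hw₁ w₂ hw₂)

theorem norm_snd_sub_le (hg : ApproximatesLinearOn g (L₁.prodMap L₂) s δ)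
    (hw₁ : w₁ ∈ s) (hw₂ : w₂ ∈ s) :
    ‖(g w₁).2 - (g w₂).2‖ ≤ ‖L₂‖ * ‖w₁.2 - w₂.2‖ + δ * ‖w₁ - w₂‖ := by
  have hsnd : ‖(g w₁).2 - (g w₂).2 - L₂ (w₁.2 - w₂.2)‖ ≤ δ * ‖w₁ - w₂‖ :=
    (norm_snd_le (g w₁ - g w₂ - L₁.prodMap L₂ (w₁ - w₂))).trans (hg w₁ hw₁ w₂ hw₂)
  calc ‖(g w₁).2 - (g w₂).2‖
      ≤ ‖L₂ (w₁.2 - w₂.2)‖ + ‖(g w₁).2 - (g w₂).2 - L₂ (w₁.2 - w₂.2)‖ :=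
        norm_le_norm_add_norm_sub' _ _
    _ ≤ ‖L₂‖ * ‖w₁.2 - w₂.2‖ + δ * ‖w₁ - w₂‖ := add_le_add (L₂.le_opNorm _) hsnd

end ApproximatesLinearOn

variable {A : E₁ ≃L[𝕜] E₁} {B : E₂ →L[𝕜] E₂} {g : E₁ × E₂ → E₁ × E₂} {φ : E₂ → E₁}

theorem ApproximatesLinearOn.norm_graphDefect_sub_sub_le {s : Set (E₁ × E₂)} {t : Set E₂}
    {δ ξ : ℝ≥0} (hg : ApproximatesLinearOn g ((A : E₁ →L[𝕜] E₁).prodMap B) s δ)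
    (hφ : LipschitzOnWith ξ φ t) {w₁ w₂ : E₁ × E₂} (hw₁ : w₁ ∈ s) (hw₂ : w₂ ∈ s)
    (ht₁ : (g w₁).2 ∈ t) (ht₂ : (g w₂).2 ∈ t) :
    ‖graphDefect A φ g w₁ - graphDefect A φ g w₂ - (w₁.1 - w₂.1)‖ ≤
      ‖(A.symm : E₁ →L[𝕜] E₁)‖ * (ξ * ‖B‖ * ‖w₁.2 - w₂.2‖ + δ * (1 + ξ) * ‖w₁ - w₂‖) := by
  have hsplit : graphDefect A φ g w₁ - graphDefect A φ g w₂ - (w₁.1 - w₂.1) =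
      A.symm (((g w₁).1 - (g w₂).1 - A (w₁.1 - w₂.1)) - (φ (g w₁).2 - φ (g w₂).2)) := by
    simp only [graphDefect, map_sub, A.symm_apply_apply]
    abel
  have hφ' : ‖φ (g w₁).2 - φ (g w₂).2‖ ≤ ξ * (‖B‖ * ‖w₁.2 - w₂.2‖ + δ * ‖w₁ - w₂‖) :=
    (hφ.norm_sub_le ht₁ ht₂).trans (by gcongr; exact hg.norm_snd_sub_le hw₁ hw₂)
  calc _ ≤ ‖(A.symm : E₁ →L[𝕜] E₁)‖ *
        ‖((g w₁).1 - (g w₂).1 - A (w₁.1 - w₂.1)) - (φ (g w₁).2 - φ (g w₂).2)‖ := by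
        rw [hsplit]; exact (A.symm : E₁ →L[𝕜] E₁).le_opNorm _
    _ ≤ ‖(A.symm : E₁ →L[𝕜] E₁)‖ *
        (δ * ‖w₁ - w₂‖ + ξ * (‖B‖ * ‖w₁.2 - w₂.2‖ + δ * ‖w₁ - w₂‖)) := by
        gcongr
        exact norm_sub_le_of_le (hg.norm_fst_sub_sub_le hw₁ hw₂) hφ'
    _ = _ := by ring

variable {δ ξ : ℝ≥0} {r R : ℝ}

theorem Prod.mk_mem_ball_zero_of_norm_le_mul (hξ : ξ ≤ 1) {x : E₁} {y : E₂}
    (hx : ‖x‖ ≤ ξ * ‖y‖) (hy : ‖y‖ < r) : (x, y) ∈ ball (0 : E₁ × E₂) r := by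
  rwa [mem_ball_zero_iff, Prod.norm_mk_of_norm_le_mul hξ hx]

theorem ApproximatesLinearOn.snd_mem_ball
    (hg : ApproximatesLinearOn g ((A : E₁ →L[𝕜] E₁).prodMap B) (ball 0 r) δ) (hg0 : g 0 = 0)
    (hrR : (‖B‖ + δ) * r < R) (hξ : ξ ≤ 1) {x : E₁} {y : E₂} (hx : ‖x‖ ≤ ξ * ‖y‖)
    (hy : ‖y‖ < r) : (g (x, y)).2 ∈ ball 0 R := by
  have hsnd := hg.norm_snd_sub_le (Prod.mk_mem_ball_zero_of_norm_le_mul hξ hx hy)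
    (mem_ball_self ((norm_nonneg y).trans_lt hy))
  simp only [hg0, Prod.snd_zero, sub_zero, Prod.norm_mk_of_norm_le_mul hξ hx] at hsnd
  rw [mem_ball_zero_iff]
  calc ‖(g (x, y)).2‖ ≤ (‖B‖ + δ) * ‖y‖ := by linarith
    _ ≤ (‖B‖ + δ) * r := by gcongr
    _ < R := hrR

theorem ApproximatesLinearOn.norm_sub_le_of_fst_apply_eq
    (hg : ApproximatesLinearOn g ((A : E₁ →L[𝕜] E₁).prodMap B) (ball 0 r) δ) (hg0 : g 0 = 0)
    (hcone : ‖(A.symm : E₁ →L[𝕜] E₁)‖ * (ξ * ‖B‖ + δ * (1 + ξ)) ≤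
      ξ * (1 - ‖(A.symm : E₁ →L[𝕜] E₁)‖ * (δ * (1 + ξ))))
    (hξ : ξ ≤ 1) (hrR : (‖B‖ + δ) * r < R) (hφ : LipschitzOnWith ξ φ (ball 0 R))
    {x₁ x₂ : E₁} {y₁ y₂ : E₂} (hx₁ : ‖x₁‖ ≤ ξ * ‖y₁‖) (hx₂ : ‖x₂‖ ≤ ξ * ‖y₂‖)
    (hy₁ : ‖y₁‖ < r) (hy₂ : ‖y₂‖ < r)
    (h₁ : (g (x₁, y₁)).1 = φ (g (x₁, y₁)).2) (h₂ : (g (x₂, y₂)).1 = φ (g (x₂, y₂)).2) :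
    ‖x₁ - x₂‖ ≤ ξ * ‖y₁ - y₂‖ := by
  set a := ‖(A.symm : E₁ →L[𝕜] E₁)‖
  set K := a * (δ * (1 + ξ))
  have hK : K < 1 := mul_lt_one_of_mul_add_le (norm_nonneg _) (norm_nonneg B) ξ.2 hcone
  have h := hg.norm_graphDefect_sub_sub_le hφ
    (Prod.mk_mem_ball_zero_of_norm_le_mul hξ hx₁ hy₁)
    (Prod.mk_mem_ball_zero_of_norm_le_mul hξ hx₂ hy₂)
    (hg.snd_mem_ball hg0 hrR hξ hx₁ hy₁) (hg.snd_mem_ball hg0 hrR hξ hx₂ hy₂)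
  simp only [graphDefect_eq_zero_iff.2 h₁, graphDefect_eq_zero_iff.2 h₂, sub_self, zero_sub,
    norm_neg, Prod.mk_sub_mk, Prod.norm_mk] at h
  have hmax : max ‖x₁ - x₂‖ ‖y₁ - y₂‖ ≤ ‖x₁ - x₂‖ + ‖y₁ - y₂‖ :=
    max_le_add_of_nonneg (norm_nonneg _) (norm_nonneg _)
  have hcontr : (1 - K) * ‖x₁ - x₂‖ ≤ (1 - K) * (ξ * ‖y₁ - y₂‖) :=
    calc (1 - K) * ‖x₁ - x₂‖
        ≤ a * (ξ * ‖B‖ * ‖y₁ - y₂‖ + δ * (1 + ξ) * (‖x₁ - x₂‖ + ‖y₁ - y₂‖)) - K * ‖x₁ - x₂‖ := by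
          rw [sub_mul, one_mul]; gcongr; exact h.trans (by gcongr)
      _ = a * (ξ * ‖B‖ + δ * (1 + ξ)) * ‖y₁ - y₂‖ := by ring
      _ ≤ ξ * (1 - K) * ‖y₁ - y₂‖ := by gcongr
      _ = (1 - K) * (ξ * ‖y₁ - y₂‖) := by ring
  exact le_of_mul_le_mul_left hcontr (sub_pos.2 hK)

variable [CompleteSpace E₁]

theorem ApproximatesLinearOn.exists_norm_le_and_fst_apply_eq
    (hg : ApproximatesLinearOn g ((A : E₁ →L[𝕜] E₁).prodMap B) (ball 0 r) δ) (hg0 : g 0 = 0)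
    (hcone : ‖(A.symm : E₁ →L[𝕜] E₁)‖ * (ξ * ‖B‖ + δ * (1 + ξ)) ≤
      ξ * (1 - ‖(A.symm : E₁ →L[𝕜] E₁)‖ * (δ * (1 + ξ))))
    (hξ : ξ ≤ 1) (hrR : (‖B‖ + δ) * r < R) (hφ0 : φ 0 = 0)
    (hφ : LipschitzOnWith ξ φ (ball 0 R)) {y : E₂} (hy : ‖y‖ < r) :
    ∃ x, ‖x‖ ≤ ξ * ‖y‖ ∧ (g (x, y)).1 = φ (g (x, y)).2 := by
  set K : ℝ≥0 := ‖(A.symm : E₁ →L[𝕜] E₁)‖₊ * (δ * (1 + ξ))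
  have hKr : (K : ℝ) = ‖(A.symm : E₁ →L[𝕜] E₁)‖ * (δ * (1 + ξ)) := by simp [K]
  have hK : K < 1 := by
    rw [← NNReal.coe_lt_coe, hKr]
    exact mul_lt_one_of_mul_add_le (norm_nonneg _) (norm_nonneg B) ξ.2 hcone
  have hr : 0 < r := (norm_nonneg y).trans_lt hy
  have hR : 0 < R := lt_of_le_of_lt (by positivity) hrR
  have hmem : ∀ x ∈ closedBall (0 : E₁) (ξ * ‖y‖),
      (x, y) ∈ ball (0 : E₁ × E₂) r ∧ (g (x, y)).2 ∈ ball 0 R := fun x hx ↦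
    ⟨Prod.mk_mem_ball_zero_of_norm_le_mul hξ (mem_closedBall_zero_iff.1 hx) hy,
      hg.snd_mem_ball hg0 hrR hξ (mem_closedBall_zero_iff.1 hx) hy⟩
  have hlip : LipschitzOnWith K (fun x ↦ x - graphDefect A φ g (x, y))
      (closedBall 0 (ξ * ‖y‖)) := by
    refine lipschitzOnWith_iff_norm_sub_le.2 fun x₁ hx₁ x₂ hx₂ ↦ ?_
    have h := hg.norm_graphDefect_sub_sub_le hφ (hmem x₁ hx₁).1 (hmem x₂ hx₂).1
      (hmem x₁ hx₁).2 (hmem x₂ hx₂).2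
    simp only [sub_self, norm_zero, mul_zero, zero_add, Prod.mk_sub_mk, Prod.norm_mk,
      max_eq_left (norm_nonneg _)] at h
    calc ‖x₁ - graphDefect A φ g (x₁, y) - (x₂ - graphDefect A φ g (x₂, y))‖
        = ‖graphDefect A φ g (x₁, y) - graphDefect A φ g (x₂, y) - (x₁ - x₂)‖ := by
          rw [← norm_neg]; congr 1; abel
      _ ≤ _ := h
      _ = K * ‖x₁ - x₂‖ := by rw [hKr]; ring
  have hcenter : dist (0 - graphDefect A φ g (0, y)) 0 ≤ (1 - K) * (ξ * ‖y‖) := by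
    have h0 : graphDefect A φ g 0 = 0 := graphDefect_eq_zero_iff.2 (by simp [hg0, hφ0])
    have hc : (0 : E₁) ∈ closedBall 0 (ξ * ‖y‖) := mem_closedBall_self (by positivity)
    have h := hg.norm_graphDefect_sub_sub_le hφ (hmem 0 hc).1 (mem_ball_self hr)
      (hmem 0 hc).2 (by simpa [hg0] using hR)
    simp only [h0, sub_zero, sub_self, Prod.fst_zero, Prod.snd_zero, Prod.norm_mk, norm_zero,
      max_eq_right (norm_nonneg y)] at h
    rw [dist_zero_right, zero_sub, norm_neg, hKr]
    calc _ ≤ _ := h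
      _ = ‖(A.symm : E₁ →L[𝕜] E₁)‖ * (ξ * ‖B‖ + δ * (1 + ξ)) * ‖y‖ := by ring
      _ ≤ ξ * (1 - ‖(A.symm : E₁ →L[𝕜] E₁)‖ * (δ * (1 + ξ))) * ‖y‖ := by gcongr
      _ = _ := by ring
  obtain ⟨x, hx, hfix⟩ := exists_isFixedPt_mem_closedBall hK hlip hcenter
  exact ⟨x, mem_closedBall_zero_iff.1 hx, graphDefect_eq_zero_iff.1 (sub_eq_self.1 hfix)⟩

theorem ApproximatesLinearOn.exists_lipschitzOnWith_image_graphOver_subset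
    (hg : ApproximatesLinearOn g ((A : E₁ →L[𝕜] E₁).prodMap B) (ball 0 r) δ) (hg0 : g 0 = 0)
    (hcone : ‖(A.symm : E₁ →L[𝕜] E₁)‖ * (ξ * ‖B‖ + δ * (1 + ξ)) ≤
      ξ * (1 - ‖(A.symm : E₁ →L[𝕜] E₁)‖ * (δ * (1 + ξ))))
    (hξ : ξ ≤ 1) (hrR : (‖B‖ + δ) * r < R) (hφ0 : φ 0 = 0)
    (hφ : LipschitzOnWith ξ φ (ball 0 R)) :
    ∃ ψ : E₂ → E₁, LipschitzOnWith ξ ψ (ball 0 r) ∧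
      g '' graphOver ψ (ball 0 r) ⊆ graphOver φ (ball 0 R) := by
  have hfiber : ∀ y ∈ ball (0 : E₂) r, ∃ x, ‖x‖ ≤ ξ * ‖y‖ ∧ (g (x, y)).1 = φ (g (x, y)).2 :=
    fun y hy ↦
      hg.exists_norm_le_and_fst_apply_eq hg0 hcone hξ hrR hφ0 hφ (mem_ball_zero_iff.1 hy)
  choose! ψ hψ hψg using hfiber
  refine ⟨ψ, lipschitzOnWith_iff_norm_sub_le.2 fun y₁ hy₁ y₂ hy₂ ↦ ?_, ?_⟩
  · exact hg.norm_sub_le_of_fst_apply_eq hg0 hcone hξ hrR hφ (hψ y₁ hy₁) (hψ y₂ hy₂)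
      (mem_ball_zero_iff.1 hy₁) (mem_ball_zero_iff.1 hy₂) (hψg y₁ hy₁) (hψg y₂ hy₂)
  · rintro _ ⟨⟨x, y⟩, ⟨hy, rfl : x = ψ y⟩, rfl⟩
    exact ⟨hg.snd_mem_ball hg0 hrR hξ (hψ y hy) (mem_ball_zero_iff.1 hy), hψg y hy⟩

end

theorem graph_transform_noninvertible_general
    (k1 k2 : ℕ)
    (A : EuclideanSpace ℂ (Fin k1) ≃L[ℂ] EuclideanSpace ℂ (Fin k1))
    (B : EuclideanSpace ℂ (Fin k2) →L[ℂ] EuclideanSpace ℂ (Fin k2))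
    (ξ0 δ : ℝ)
    (hξ0 : 0 ≤ ξ0) (hξ0' : ξ0 ≤ 1) (hδ : 0 < δ)
    (hcond2 : 0 <
      ‖(A.symm : EuclideanSpace ℂ (Fin k1) →L[ℂ] EuclideanSpace ℂ (Fin k1))‖⁻¹ - δ * (1 + ξ0))
    (hcond3 : (ξ0 * ‖B‖ + δ * (1 + ξ0)) *
      (‖(A.symm : EuclideanSpace ℂ (Fin k1) →L[ℂ] EuclideanSpace ℂ (Fin k1))‖⁻¹
        - δ * (1 + ξ0))⁻¹ ≤ ξ0)
    (R0 : ℝ)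
    (g : EuclideanSpace ℂ (Fin k1) × EuclideanSpace ℂ (Fin k2) →
      EuclideanSpace ℂ (Fin k1) × EuclideanSpace ℂ (Fin k2))
    (Dg : EuclideanSpace ℂ (Fin k1) × EuclideanSpace ℂ (Fin k2) →
      (EuclideanSpace ℂ (Fin k1) × EuclideanSpace ℂ (Fin k2) →L[ℂ]
        EuclideanSpace ℂ (Fin k1) × EuclideanSpace ℂ (Fin k2)))
    (hdiff : ∀ w ∈ ball (0 : EuclideanSpace ℂ (Fin k1) × EuclideanSpace ℂ (Fin k2)) R0,
      HasFDerivAt g (Dg w) w)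
    (hg0 : g 0 = 0)
    (hDg0 : Dg 0 =
      ContinuousLinearMap.prodMap
        (A : EuclideanSpace ℂ (Fin k1) →L[ℂ] EuclideanSpace ℂ (Fin k1)) B)
    (hclose : ∀ w ∈ ball (0 : EuclideanSpace ℂ (Fin k1) × EuclideanSpace ℂ (Fin k2)) R0,
      ‖Dg w - Dg 0‖ ≤ δ)
    (R : ℝ) (hR : 0 < R) (hRR0 : R ≤ R0)
    (φ : EuclideanSpace ℂ (Fin k2) → EuclideanSpace ℂ (Fin k1))
    (hφ0 : φ 0 = 0)
    (hφlip : LipschitzOnWith ξ0.toNNReal φ (ball (0 : EuclideanSpace ℂ (Fin k2)) R)) :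
    ∃ ψ : EuclideanSpace ℂ (Fin k2) → EuclideanSpace ℂ (Fin k1),
      LipschitzOnWith ξ0.toNNReal ψ
        (ball (0 : EuclideanSpace ℂ (Fin k2)) (R / max 1 (‖B‖ + 2 * δ))) ∧
      g '' {p : EuclideanSpace ℂ (Fin k1) × EuclideanSpace ℂ (Fin k2) |
          p.2 ∈ ball (0 : EuclideanSpace ℂ (Fin k2)) (R / max 1 (‖B‖ + 2 * δ)) ∧ p.1 = ψ p.2} ⊆
        {p : EuclideanSpace ℂ (Fin k1) × EuclideanSpace ℂ (Fin k2) |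
          p.2 ∈ ball (0 : EuclideanSpace ℂ (Fin k2)) R ∧ p.1 = φ p.2} := by
  lift ξ0 to ℝ≥0 using hξ0
  lift δ to ℝ≥0 using hδ.le
  rw [Real.toNNReal_coe] at hφlip ⊢
  have hcone := mul_add_le_of_mul_inv_sub_le (norm_nonneg _) (by positivity) hcond2 hcond3
  have happrox : ApproximatesLinearOn g ((A : EuclideanSpace ℂ (Fin k1) →L[ℂ] _).prodMap B)
      (ball 0 R0) δ := fun w₁ hw₁ w₂ hw₂ ↦
    (convex_ball 0 R0).norm_image_sub_le_of_norm_hasFDerivWithin_le'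
      (fun w hw ↦ (hdiff w hw).hasFDerivWithinAt) (hDg0 ▸ hclose) hw₂ hw₁
  have hM : ‖B‖ + δ < max 1 (‖B‖ + 2 * δ) :=
    lt_of_lt_of_le (by linarith) (le_max_right _ _)
  have hr : R / max 1 (‖B‖ + 2 * δ) ≤ R0 := (div_le_self hR.le (le_max_left _ _)).trans hRR0
  have hrR : (‖B‖ + δ) * (R / max 1 (‖B‖ + 2 * δ)) < R := by
    calc _ < max 1 (‖B‖ + 2 * δ) * (R / max 1 (‖B‖ + 2 * δ)) := by gcongr
      _ = R := mul_div_cancel₀ R (by positivity)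
  exact (happrox.mono_set (ball_subset_ball hr)).exists_lipschitzOnWith_image_graphOver_subset
    hg0 hcone (by exact_mod_cast hξ0') hrR hφ0 hφlip

/-- Graph transform theorem in the non-invertible case. `ℂ^k` is identified with
`ℂ^{k₁} × ℂ^{k₂}` with a product norm; `A` is an invertible linear map of `ℂ^{k₁}`,
`B` a linear map of `ℂ^{k₂}` with `‖B‖ < ‖A⁻¹‖⁻¹`, and `g` is holomorphic on the ball
`B(0,R₀)`, with `g 0 = 0`, `Dg 0 = (A, B)` block diagonal, `‖Dg w - Dg 0‖ ≤ δ`.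
Under the stated arithmetic conditions on `ξ = 1 - ‖B‖‖A⁻¹‖`, `ξ₀` and `δ`, any
`ξ₀`-Lipschitz graph `(φ(y), y)` over `B(0,R)` pulls back under `g` to a
`ξ₀`-Lipschitz graph `(ψ(y), y)` over `B(0, R / max 1 (‖B‖ + 2δ))`. -/
theorem graph_transform_noninvertible
    (k1 k2 : ℕ) (hk1 : 1 ≤ k1)
    (A : EuclideanSpace ℂ (Fin k1) ≃L[ℂ] EuclideanSpace ℂ (Fin k1))
    (B : EuclideanSpace ℂ (Fin k2) →L[ℂ] EuclideanSpace ℂ (Fin k2))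
    (hB : ‖B‖ < ‖(A.symm : EuclideanSpace ℂ (Fin k1) →L[ℂ] EuclideanSpace ℂ (Fin k1))‖⁻¹)
    (ξ ξ0 δ : ℝ)
    (hξ : ξ = 1 - ‖B‖ * ‖(A.symm : EuclideanSpace ℂ (Fin k1) →L[ℂ] EuclideanSpace ℂ (Fin k1))‖)
    (hξ0 : 0 ≤ ξ0) (hξ0' : ξ0 ≤ 1) (hδ : 0 < δ)
    (hcond1 : ξ0 * (1 - ξ) + 2 * δ * (1 + ξ0) *
      ‖(A.symm : EuclideanSpace ℂ (Fin k1) →L[ℂ] EuclideanSpace ℂ (Fin k1))‖ ≤ 1)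
    (hcond2 : 0 <
      ‖(A.symm : EuclideanSpace ℂ (Fin k1) →L[ℂ] EuclideanSpace ℂ (Fin k1))‖⁻¹ - δ * (1 + ξ0))
    (hcond3 : (ξ0 * ‖B‖ + δ * (1 + ξ0)) *
      (‖(A.symm : EuclideanSpace ℂ (Fin k1) →L[ℂ] EuclideanSpace ℂ (Fin k1))‖⁻¹
        - δ * (1 + ξ0))⁻¹ ≤ ξ0)
    (R0 R1 : ℝ) (hR0 : 0 < R0) (hR01 : R0 ≤ R1)
    (g : EuclideanSpace ℂ (Fin k1) × EuclideanSpace ℂ (Fin k2) →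
      EuclideanSpace ℂ (Fin k1) × EuclideanSpace ℂ (Fin k2))
    (Dg : EuclideanSpace ℂ (Fin k1) × EuclideanSpace ℂ (Fin k2) →
      (EuclideanSpace ℂ (Fin k1) × EuclideanSpace ℂ (Fin k2) →L[ℂ]
        EuclideanSpace ℂ (Fin k1) × EuclideanSpace ℂ (Fin k2)))
    (hmaps : MapsTo g (ball (0 : EuclideanSpace ℂ (Fin k1) × EuclideanSpace ℂ (Fin k2)) R0)
      (ball (0 : EuclideanSpace ℂ (Fin k1) × EuclideanSpace ℂ (Fin k2)) R1))
    (hdiff : ∀ w ∈ ball (0 : EuclideanSpace ℂ (Fin k1) × EuclideanSpace ℂ (Fin k2)) R0,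
      HasFDerivAt g (Dg w) w)
    (hg0 : g 0 = 0)
    (hDg0 : Dg 0 =
      ContinuousLinearMap.prodMap
        (A : EuclideanSpace ℂ (Fin k1) →L[ℂ] EuclideanSpace ℂ (Fin k1)) B)
    (hclose : ∀ w ∈ ball (0 : EuclideanSpace ℂ (Fin k1) × EuclideanSpace ℂ (Fin k2)) R0,
      ‖Dg w - Dg 0‖ ≤ δ)
    (R : ℝ) (hR : 0 < R) (hRR0 : R ≤ R0)
    (φ : EuclideanSpace ℂ (Fin k2) → EuclideanSpace ℂ (Fin k1))
    (hφ0 : φ 0 = 0)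
    (hφlip : LipschitzOnWith ξ0.toNNReal φ (ball (0 : EuclideanSpace ℂ (Fin k2)) R)) :
    ∃ ψ : EuclideanSpace ℂ (Fin k2) → EuclideanSpace ℂ (Fin k1),
      LipschitzOnWith ξ0.toNNReal ψ
        (ball (0 : EuclideanSpace ℂ (Fin k2)) (R / max 1 (‖B‖ + 2 * δ))) ∧
      g '' {p : EuclideanSpace ℂ (Fin k1) × EuclideanSpace ℂ (Fin k2) |
          p.2 ∈ ball (0 : EuclideanSpace ℂ (Fin k2)) (R / max 1 (‖B‖ + 2 * δ)) ∧ p.1 = ψ p.2} ⊆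
        {p : EuclideanSpace ℂ (Fin k1) × EuclideanSpace ℂ (Fin k2) |
          p.2 ∈ ball (0 : EuclideanSpace ℂ (Fin k2)) R ∧ p.1 = φ p.2} :=
  graph_transform_noninvertible_general k1 k2 A B ξ0 δ hξ0 hξ0' hδ hcond2 hcond3 R0 g Dg hdiff hg0
    hDg0 hclose R hR hRR0 φ hφ0 hφlip
end

section
/- Let $\Omega$ and $K$ be compact metric spaces with their Borel $\sigma$-algebras, $\Lambda$ a Borel probability measure on $\Omega$, and $F : \Omega \to \Omega$ a measurable map preserving $\Lambda$ that is ergodic with respect to $\Lambda$. Let $\omega \mapsto \mu_\omega$ be a Markov kernel from $\Omega$ to $K$ and $\varphi : \Omega \times K \to K$ a measurable map such that for $\Lambda$-almost every $\omega$, $\varphi(\omega,\cdot)_*\mu_\omega = \mu_{F(\omega)}$. Define $\alpha$ on $\Omega \times K$ by $\alpha(B) = \int_\Omega \mu_\omega(\{x : (\omega,x) \in B\})\,d\Lambda(\omega)$ and $\tau(\omega,x) = (F(\omega), \varphi(\omega,x))$. Assume the following fiberwise decorrelation: for $\Lambda$-almost every $\omega$ and all continuous functions $h, \psi : \Omega \times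 K \to \mathbb{R}$, $\int_K h(\tau^n(\omega,x))\,\psi(\omega,x)\,d\mu_\omega(x) - \Big(\int_K h(F^n(\omega),y)\,d\mu_{F^n(\omega)}(y)\Big)\Big(\int_K \psi(\omega,x)\,d\mu_\omega(x)\Big) \to 0$ as $n \to \infty$. Then $\tau$ is ergodic with respect to $\alpha$. -/
/-!
Write `α = Λ ⊗ κ`, `τ` for the skew product and `P u ω = ∫ u (ω, x) dκ_ω` for the fibre average.
The correlation defect `Dₙ u = ∫ (u ∘ τⁿ) u dα - ∫ (P u ∘ Fⁿ) (P u) dΛ` is `4`-Lipschitz in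
`L¹(α)` on functions bounded by `1`, because `τ` and `F` preserve `α` and `Λ`, and integrating the
decorrelation hypothesis gives `Dₙ f → 0` for continuous `f`. If `A` is `τ`-invariant, its fibre
measure `P 1_A` is `F`-invariant, hence a.e. equal to `a = α A` by ergodicity of `F`, so
`Dₙ 1_A = a - a²` for every `n`. Approximating `1_A` in `L¹(α)` by continuous functions bounded
by `1` gives `a = a²`.
-/

open MeasureTheory ProbabilityTheory Filter Set Topology

lemma abs_mul_le_one_of_abs_le_one {a b : ℝ} (ha : |a| ≤ 1) (hb : |b| ≤ 1) : |a * b| ≤ 1 := by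
  simpa [abs_mul] using mul_le_one₀ ha (abs_nonneg b) hb

section Correlation

variable {X : Type*} [MeasurableSpace X] {μ : Measure X}

noncomputable def correlation (μ : Measure X) (T : X → X) (u : X → ℝ) : ℝ := ∫ x, u (T x) * u x ∂μ

lemma abs_integral_mul_sub_integral_mul_le [IsFiniteMeasure μ] {g₁ g₂ h₁ h₂ : X → ℝ}
    (hg₁ : AEStronglyMeasurable g₁ μ) (hg₂ : AEStronglyMeasurable g₂ μ)
    (hh₁ : AEStronglyMeasurable h₁ μ) (hh₂ : AEStronglyMeasurable h₂ μ)
    (bg₁ : ∀ x, |g₁ x| ≤ 1) (bg₂ : ∀ x, |g₂ x| ≤ 1)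
    (bh₁ : ∀ x, |h₁ x| ≤ 1) (bh₂ : ∀ x, |h₂ x| ≤ 1) :
    |∫ x, g₁ x * h₁ x ∂μ - ∫ x, g₂ x * h₂ x ∂μ| ≤
      ∫ x, |g₁ x - g₂ x| ∂μ + ∫ x, |h₁ x - h₂ x| ∂μ := by
  have int_mul {u v : X → ℝ} (hu : AEStronglyMeasurable u μ) (hv : AEStronglyMeasurable v μ)
      (bu : ∀ x, |u x| ≤ 1) (bv : ∀ x, |v x| ≤ 1) : Integrable (fun x => u x * v x) μ :=
    .of_bound (hu.mul hv) 1 (ae_of_all _ fun x => abs_mul_le_one_of_abs_le_one (bu x) (bv x))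
  have int_abs_sub {u v : X → ℝ} (hu : AEStronglyMeasurable u μ) (hv : AEStronglyMeasurable v μ)
      (bu : ∀ x, |u x| ≤ 1) (bv : ∀ x, |v x| ≤ 1) : Integrable (fun x => |u x - v x|) μ :=
    .of_bound (hu.sub hv).norm 2 (ae_of_all _ fun x => by
      simpa [one_add_one_eq_two] using (abs_sub (u x) (v x)).trans (add_le_add (bu x) (bv x)))
  have hg := int_abs_sub hg₁ hg₂ bg₁ bg₂
  have hh := int_abs_sub hh₁ hh₂ bh₁ bh₂
  rw [← integral_sub (int_mul hg₁ hh₁ bg₁ bh₁) (int_mul hg₂ hh₂ bg₂ bh₂), ← integral_add hg hh]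
  refine (abs_integral_le_integral_abs (μ := μ)).trans <| integral_mono_of_nonneg
    (ae_of_all _ fun _ => abs_nonneg _) (hg.add hh) (ae_of_all _ fun x => ?_)
  calc |g₁ x * h₁ x - g₂ x * h₂ x| = |(g₁ x - g₂ x) * h₁ x + g₂ x * (h₁ x - h₂ x)| := by ring_nf
    _ ≤ |g₁ x - g₂ x| * |h₁ x| + |g₂ x| * |h₁ x - h₂ x| := by
        simpa only [abs_mul] using abs_add_le ((g₁ x - g₂ x) * h₁ x) (g₂ x * (h₁ x - h₂ x))
    _ ≤ |g₁ x - g₂ x| + |h₁ x - h₂ x| :=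
        add_le_add (mul_le_of_le_one_right (abs_nonneg _) (bh₁ x))
          (mul_le_of_le_one_left (abs_nonneg _) (bg₂ x))

lemma MeasureTheory.MeasurePreserving.integral_comp_of_aestronglyMeasurable {Y : Type*}
    [MeasurableSpace Y] {ν : Measure Y} {T : X → Y} (hT : MeasurePreserving T μ ν) {u : Y → ℝ}
    (hu : AEStronglyMeasurable u ν) : ∫ x, u (T x) ∂μ = ∫ y, u y ∂ν := by
  rw [← integral_map hT.measurable.aemeasurable (hT.map_eq ▸ hu), hT.map_eq]

lemma abs_correlation_sub_correlation_le [IsFiniteMeasure μ] {T : X → X}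
    (hT : MeasurePreserving T μ μ) {f g : X → ℝ} (hf : Measurable f) (hg : Measurable g)
    (bf : ∀ x, |f x| ≤ 1) (bg : ∀ x, |g x| ≤ 1) :
    |correlation μ T f - correlation μ T g| ≤ 2 * ∫ x, |f x - g x| ∂μ := by
  have h := abs_integral_mul_sub_integral_mul_le (μ := μ) (g₁ := fun x => f (T x))
    (g₂ := fun x => g (T x))
    (hf.comp hT.measurable).aestronglyMeasurable (hg.comp hT.measurable).aestronglyMeasurable
    hf.aestronglyMeasurable hg.aestronglyMeasurable (fun x => bf (T x)) (fun x => bg (T x)) bf bg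
  rwa [hT.integral_comp_of_aestronglyMeasurable (u := fun x => |f x - g x|)
    (hf.sub hg).abs.aestronglyMeasurable, ← two_mul] at h

lemma correlation_indicator_of_preimage_eq {T : X → X} {A : Set X} (hA : MeasurableSet A)
    (hTA : T ⁻¹' A = A) : correlation μ T (A.indicator 1) = μ.real A := by
  have hmul (x : X) : A.indicator (1 : X → ℝ) (T x) * A.indicator 1 x = A.indicator 1 x := by
    by_cases hx : x ∈ A
    · have hTx : T x ∈ A := by rwa [← mem_preimage, hTA]
      simp [hx, hTx]
    · simp [hx]
  simp only [correlation, hmul, integral_indicator_one hA]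

lemma correlation_of_ae_eq_const [IsProbabilityMeasure μ] {T : X → X}
    (hT : MeasurePreserving T μ μ) {u : X → ℝ} {c : ℝ} (hu : u =ᵐ[μ] fun _ => c) :
    correlation μ T u = c ^ 2 := by
  have huT : u ∘ T =ᵐ[μ] fun _ => c := hT.quasiMeasurePreserving.ae_eq_comp hu
  have hprod : (fun x => u (T x) * u x) =ᵐ[μ] fun _ => c * c := huT.mul hu
  rw [correlation, integral_congr_ae hprod, integral_const]
  simp [sq]

lemma preErgodic_of_forall_measureReal_eq_sq {X : Type*} [MeasurableSpace X] {μ : Measure X}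
    [IsProbabilityMeasure μ] {T : X → X}
    (h : ∀ A, MeasurableSet A → T ⁻¹' A = A → μ.real A = μ.real A ^ 2) : PreErgodic T μ := by
  refine ⟨fun A hA hTA => ?_⟩
  rw [eventuallyConst_set', ae_eq_empty, ae_eq_univ, prob_compl_eq_zero_iff hA]
  have : μ.real A * (1 - μ.real A) = 0 := by linear_combination h A hA hTA
  rcases mul_eq_zero.mp this with h₀ | h₁
  · exact .inl ((measureReal_eq_zero_iff).mp h₀)
  · exact .inr ((ENNReal.toReal_eq_one_iff _).mp (by rw [← measureReal_def]; linarith))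

end Correlation

lemma abs_clamp_sub_le {s t : ℝ} (hs₀ : 0 ≤ s) (hs₁ : s ≤ 1) :
    |max 0 (min 1 t) - s| ≤ |t - s| := by
  calc |max 0 (min 1 t) - s| = |max (min 1 t) 0 - max (min 1 s) 0| := by
        rw [max_comm, min_eq_right hs₁, max_eq_left hs₀]
    _ ≤ |min 1 t - min 1 s| := abs_max_sub_max_le_abs _ _ _
    _ ≤ |t - s| := by simpa using abs_min_sub_min_le_max 1 t 1 s

lemma exists_continuous_abs_le_one_integral_abs_sub_indicator_le {X : Type*} [TopologicalSpace X]
    [NormalSpace X] [MeasurableSpace X] [BorelSpace X] {μ : Measure X} [IsFiniteMeasure μ]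
    [μ.WeaklyRegular] {A : Set X} (hA : MeasurableSet A) {ε : ℝ} (hε : 0 < ε) :
    ∃ f : X → ℝ, Continuous f ∧ (∀ x, |f x| ≤ 1) ∧ ∫ x, |f x - A.indicator 1 x| ∂μ ≤ ε := by
  have hA_int : Integrable (A.indicator (1 : X → ℝ)) μ := (integrable_const 1).indicator hA
  obtain ⟨g, hg, -⟩ := hA_int.exists_boundedContinuous_integral_sub_le hε
  set f : X → ℝ := fun x => max 0 (min 1 (g x))
  have hf : Continuous f := by fun_prop
  have hdist (x : X) : |f x - A.indicator 1 x| ≤ ‖A.indicator 1 x - g x‖ := by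
    rw [Real.norm_eq_abs, abs_sub_comm _ (g x)]
    exact abs_clamp_sub_le (indicator_nonneg (fun _ _ => zero_le_one) x)
      (indicator_le_self' (fun _ _ => zero_le_one) x)
  have hg_int : Integrable (fun x => ‖A.indicator 1 x - g x‖) μ :=
    (hA_int.sub (g.integrable μ)).norm
  refine ⟨f, hf, fun x => abs_le.mpr ⟨?_, max_le zero_le_one (min_le_left _ _)⟩, ?_⟩
  · linarith [le_max_left 0 (min 1 (g x))]
  · refine le_trans (integral_mono ?_ hg_int hdist) hg
    exact hg_int.mono' (hf.measurable.sub (measurable_one.indicator hA)).abs.aestronglyMeasurable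
      (ae_of_all _ fun x => by simpa using hdist x)

section Fiber

variable {Ω K : Type*} [MeasurableSpace Ω] [MeasurableSpace K] {κ : Kernel Ω K}

noncomputable def fiberIntegral (κ : Kernel Ω K) (u : Ω × K → ℝ) (ω : Ω) : ℝ :=
  ∫ x, u (ω, x) ∂κ ω

lemma measurable_fiberIntegral [IsSFiniteKernel κ] {u : Ω × K → ℝ} (hu : Measurable u) :
    Measurable (fiberIntegral κ u) :=
  hu.stronglyMeasurable.integral_kernel_prod_right'.measurable

lemma abs_fiberIntegral_le_one [IsMarkovKernel κ] {u : Ω × K → ℝ} (hu : ∀ p, |u p| ≤ 1)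
    (ω : Ω) : |fiberIntegral κ u ω| ≤ 1 := by
  simpa [fiberIntegral] using norm_integral_le_of_norm_le_const (μ := κ ω)
    (f := fun x => u (ω, x)) (C := 1) (ae_of_all _ fun x => hu (ω, x))

lemma fiberIntegral_indicator_one {A : Set (Ω × K)} (hA : MeasurableSet A) (ω : Ω) :
    fiberIntegral κ (A.indicator 1) ω = (κ ω).real (Prod.mk ω ⁻¹' A) :=
  integral_indicator_one (measurable_prodMk_left hA)

lemma integral_fiberIntegral (Λ : Measure Ω) [SFinite Λ] [IsSFiniteKernel κ] {u : Ω × K → ℝ}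
    (hu : Integrable u (Λ ⊗ₘ κ)) : ∫ ω, fiberIntegral κ u ω ∂Λ = ∫ p, u p ∂(Λ ⊗ₘ κ) :=
  (Measure.integral_compProd hu).symm

lemma integral_abs_fiberIntegral_sub_le (Λ : Measure Ω) [SFinite Λ] [IsSFiniteKernel κ]
    {f g : Ω × K → ℝ} (hf : Integrable f (Λ ⊗ₘ κ)) (hg : Integrable g (Λ ⊗ₘ κ)) :
    ∫ ω, |fiberIntegral κ f ω - fiberIntegral κ g ω| ∂Λ ≤ ∫ p, |f p - g p| ∂(Λ ⊗ₘ κ) := by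
  have hfg : Integrable (fun p => f p - g p) (Λ ⊗ₘ κ) := hf.sub hg
  rw [Measure.integral_compProd hfg.abs]
  have fibers {u : Ω × K → ℝ} (hu : Integrable u (Λ ⊗ₘ κ)) :=
    (Measure.integrable_compProd_iff hu.aestronglyMeasurable).mp hu
  refine integral_mono_of_nonneg (ae_of_all _ fun _ => abs_nonneg _) (fibers hfg).2 ?_
  filter_upwards [(fibers hf).1, (fibers hg).1] with ω hfω hgω
  rw [fiberIntegral, fiberIntegral, ← integral_sub hfω hgω]
  exact abs_integral_le_integral_abs

end Fiber

section SkewProduct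

variable {Ω K : Type*} [MeasurableSpace Ω] [MeasurableSpace K] {Λ : Measure Ω} {κ : Kernel Ω K}
  {F : Ω → Ω} {φ : Ω × K → K}

def skewProduct (F : Ω → Ω) (φ : Ω × K → K) (p : Ω × K) : Ω × K := (F p.1, φ p)

lemma measurable_skewProduct (hF : Measurable F) (hφ : Measurable φ) :
    Measurable (skewProduct F φ) :=
  (hF.comp measurable_fst).prodMk hφ

lemma ae_measure_preimage_skewProduct_prodMk (hφ : Measurable φ)
    (hinv : ∀ᵐ ω ∂Λ, (κ ω).map (fun x => φ (ω, x)) = κ (F ω))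
    {B : Set (Ω × K)} (hB : MeasurableSet B) :
    ∀ᵐ ω ∂Λ, κ ω (Prod.mk ω ⁻¹' (skewProduct F φ ⁻¹' B)) = κ (F ω) (Prod.mk (F ω) ⁻¹' B) := by
  filter_upwards [hinv] with ω hω
  have hφω : Measurable fun x => φ (ω, x) := hφ.comp measurable_prodMk_left
  rw [← hω, Measure.map_apply hφω (measurable_prodMk_left hB)]
  rfl

lemma measurePreserving_skewProduct [SFinite Λ] [IsSFiniteKernel κ]
    (hF : MeasurePreserving F Λ Λ) (hφ : Measurable φ)
    (hinv : ∀ᵐ ω ∂Λ, (κ ω).map (fun x => φ (ω, x)) = κ (F ω)) :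
    MeasurePreserving (skewProduct F φ) (Λ ⊗ₘ κ) (Λ ⊗ₘ κ) := by
  have hτ := measurable_skewProduct hF.measurable hφ
  refine ⟨hτ, Measure.ext fun B hB => ?_⟩
  rw [Measure.map_apply hτ hB, Measure.compProd_apply (hτ hB), Measure.compProd_apply hB,
    lintegral_congr_ae (ae_measure_preimage_skewProduct_prodMk hφ hinv hB)]
  exact hF.lintegral_comp (Kernel.measurable_kernel_prodMk_left hB)

noncomputable def correlationDefect (Λ : Measure Ω) (κ : Kernel Ω K) (F : Ω → Ω)
    (φ : Ω × K → K) (n : ℕ) (u : Ω × K → ℝ) : ℝ :=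
  correlation (Λ ⊗ₘ κ) (skewProduct F φ)^[n] u - correlation Λ F^[n] (fiberIntegral κ u)

variable [IsProbabilityMeasure Λ] [IsMarkovKernel κ]

lemma abs_correlationDefect_sub_le (hF : MeasurePreserving F Λ Λ)
    (hτ : MeasurePreserving (skewProduct F φ) (Λ ⊗ₘ κ) (Λ ⊗ₘ κ))
    {f g : Ω × K → ℝ} (hf : Measurable f) (hg : Measurable g)
    (bf : ∀ p, |f p| ≤ 1) (bg : ∀ p, |g p| ≤ 1) (n : ℕ) :
    |correlationDefect Λ κ F φ n f - correlationDefect Λ κ F φ n g| ≤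
      4 * ∫ p, |f p - g p| ∂(Λ ⊗ₘ κ) := by
  have h₁ := abs_correlation_sub_correlation_le (hτ.iterate n) hf hg bf bg
  have h₂ := abs_correlation_sub_correlation_le (hF.iterate n)
    (measurable_fiberIntegral (κ := κ) hf) (measurable_fiberIntegral (κ := κ) hg)
    (abs_fiberIntegral_le_one (κ := κ) bf) (abs_fiberIntegral_le_one (κ := κ) bg)
  have h₃ := integral_abs_fiberIntegral_sub_le (κ := κ) Λ
    (.of_bound hf.aestronglyMeasurable 1 (ae_of_all _ bf))
    (.of_bound hg.aestronglyMeasurable 1 (ae_of_all _ bg))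
  rw [correlationDefect, correlationDefect, abs_le]
  rw [abs_le] at h₁ h₂
  constructor <;> linarith [h₁.1, h₁.2, h₂.1, h₂.2]

lemma fiberIntegral_indicator_one_ae_eq (hF : Ergodic F Λ) (hφ : Measurable φ)
    (hinv : ∀ᵐ ω ∂Λ, (κ ω).map (fun x => φ (ω, x)) = κ (F ω))
    {A : Set (Ω × K)} (hA : MeasurableSet A) (hAinv : skewProduct F φ ⁻¹' A = A) :
    fiberIntegral κ (A.indicator 1) =ᵐ[Λ] fun _ => (Λ ⊗ₘ κ).real A := by
  have hcomp : fiberIntegral κ (A.indicator 1) ∘ F =ᵐ[Λ] fiberIntegral κ (A.indicator 1) := by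
    filter_upwards [ae_measure_preimage_skewProduct_prodMk hφ hinv hA] with ω hω
    simp only [Function.comp, fiberIntegral_indicator_one hA, measureReal_def, ← hω, hAinv]
  obtain ⟨c, hc⟩ := hF.ae_eq_const_of_ae_eq_comp₀
    (measurable_fiberIntegral (measurable_one.indicator hA)).nullMeasurable hcomp
  suffices c = (Λ ⊗ₘ κ).real A from this ▸ hc
  calc c = ∫ ω, fiberIntegral κ (A.indicator 1) ω ∂Λ := by simp [integral_congr_ae hc]
    _ = ∫ p, A.indicator 1 p ∂(Λ ⊗ₘ κ) :=
        integral_fiberIntegral Λ ((integrable_const 1).indicator hA)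
    _ = (Λ ⊗ₘ κ).real A := integral_indicator_one hA

lemma correlationDefect_indicator_one (hF : Ergodic F Λ) (hφ : Measurable φ)
    (hinv : ∀ᵐ ω ∂Λ, (κ ω).map (fun x => φ (ω, x)) = κ (F ω))
    {A : Set (Ω × K)} (hA : MeasurableSet A) (hAinv : skewProduct F φ ⁻¹' A = A) (n : ℕ) :
    correlationDefect Λ κ F φ n (A.indicator 1) = (Λ ⊗ₘ κ).real A - (Λ ⊗ₘ κ).real A ^ 2 := by
  rw [correlationDefect,
    correlation_indicator_of_preimage_eq hA (Function.IsFixedPt.preimage_iterate hAinv n),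
    correlation_of_ae_eq_const (hF.toMeasurePreserving.iterate n)
      (fiberIntegral_indicator_one_ae_eq hF hφ hinv hA hAinv)]

noncomputable def fiberCorrelationDefect (κ : Kernel Ω K) (F : Ω → Ω) (φ : Ω × K → K) (n : ℕ)
    (u : Ω × K → ℝ) (ω : Ω) : ℝ :=
  fiberIntegral κ (fun p => u ((skewProduct F φ)^[n] p) * u p) ω -
    fiberIntegral κ u (F^[n] ω) * fiberIntegral κ u ω

lemma abs_fiberCorrelationDefect_le_two {u : Ω × K → ℝ} (bu : ∀ p, |u p| ≤ 1) (n : ℕ) (ω : Ω) :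
    |fiberCorrelationDefect κ F φ n u ω| ≤ 2 :=
  (abs_sub _ _).trans <| by
    linarith [abs_fiberIntegral_le_one (κ := κ) (fun p => abs_mul_le_one_of_abs_le_one
        (bu ((skewProduct F φ)^[n] p)) (bu p)) ω,
      abs_mul_le_one_of_abs_le_one (abs_fiberIntegral_le_one (κ := κ) bu (F^[n] ω))
        (abs_fiberIntegral_le_one (κ := κ) bu ω)]

lemma measurable_fiberCorrelationDefect (hF : Measurable F) (hφ : Measurable φ)
    {u : Ω × K → ℝ} (hu : Measurable u) (n : ℕ) :
    Measurable (fiberCorrelationDefect κ F φ n u) :=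
  (measurable_fiberIntegral ((hu.comp ((measurable_skewProduct hF hφ).iterate n)).mul hu)).sub
    (((measurable_fiberIntegral hu).comp (hF.iterate n)).mul (measurable_fiberIntegral hu))

lemma correlationDefect_eq_integral (hF : Measurable F) (hφ : Measurable φ) {u : Ω × K → ℝ}
    (hu : Measurable u) (bu : ∀ p, |u p| ≤ 1) (n : ℕ) :
    correlationDefect Λ κ F φ n u = ∫ ω, fiberCorrelationDefect κ F φ n u ω ∂Λ := by
  have hcorr_m : Measurable fun p => u ((skewProduct F φ)^[n] p) * u p :=
    (hu.comp ((measurable_skewProduct hF hφ).iterate n)).mul hu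
  have hcorr_b (p : Ω × K) : |u ((skewProduct F φ)^[n] p) * u p| ≤ 1 :=
    abs_mul_le_one_of_abs_le_one (bu _) (bu p)
  have hfiber_m : Measurable fun ω => fiberIntegral κ u (F^[n] ω) * fiberIntegral κ u ω :=
    ((measurable_fiberIntegral hu).comp (hF.iterate n)).mul (measurable_fiberIntegral hu)
  have hfiber_b (ω : Ω) : |fiberIntegral κ u (F^[n] ω) * fiberIntegral κ u ω| ≤ 1 :=
    abs_mul_le_one_of_abs_le_one (abs_fiberIntegral_le_one bu _) (abs_fiberIntegral_le_one bu ω)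
  rw [correlationDefect, correlation, correlation,
    ← integral_fiberIntegral Λ (.of_bound hcorr_m.aestronglyMeasurable 1 (ae_of_all _ hcorr_b)),
    ← integral_sub (.of_bound (measurable_fiberIntegral hcorr_m).aestronglyMeasurable 1
      (ae_of_all _ (abs_fiberIntegral_le_one hcorr_b)))
      (.of_bound hfiber_m.aestronglyMeasurable 1 (ae_of_all _ hfiber_b))]
  rfl

lemma tendsto_correlationDefect_zero (hF : Measurable F) (hφ : Measurable φ)
    {f : Ω × K → ℝ} (hf : Measurable f) (bf : ∀ p, |f p| ≤ 1)
    (hdecor : ∀ᵐ ω ∂Λ, Tendsto (fun n => fiberCorrelationDefect κ F φ n f ω) atTop (𝓝 0)) :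
    Tendsto (fun n => correlationDefect Λ κ F φ n f) atTop (𝓝 0) := by
  simp_rw [correlationDefect_eq_integral hF hφ hf bf]
  simpa using tendsto_integral_of_dominated_convergence (fun _ => 2)
    (fun n => (measurable_fiberCorrelationDefect hF hφ hf n).aestronglyMeasurable)
    (integrable_const 2) (fun n => ae_of_all _ (abs_fiberCorrelationDefect_le_two bf n)) hdecor

end SkewProduct

section SkewProductTopology

variable {Ω K : Type*} [MetricSpace Ω] [SecondCountableTopology Ω] [MeasurableSpace Ω]
  [BorelSpace Ω] [MetricSpace K] [SecondCountableTopology K] [MeasurableSpace K] [BorelSpace K]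
  {Λ : Measure Ω} {κ : Kernel Ω K} {F : Ω → Ω} {φ : Ω × K → K}
  [IsProbabilityMeasure Λ] [IsMarkovKernel κ]

lemma measureReal_eq_sq_of_preimage_skewProduct_eq (hF : Ergodic F Λ) (hφ : Measurable φ)
    (hinv : ∀ᵐ ω ∂Λ, (κ ω).map (fun x => φ (ω, x)) = κ (F ω))
    (hdecor : ∀ f : Ω × K → ℝ, Continuous f →
      ∀ᵐ ω ∂Λ, Tendsto (fun n => fiberCorrelationDefect κ F φ n f ω) atTop (𝓝 0))
    {A : Set (Ω × K)} (hA : MeasurableSet A) (hAinv : skewProduct F φ ⁻¹' A = A) :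
    (Λ ⊗ₘ κ).real A = (Λ ⊗ₘ κ).real A ^ 2 := by
  set a := (Λ ⊗ₘ κ).real A
  refine sub_eq_zero.mp (eq_of_forall_dist_le fun ε hε => ?_)
  obtain ⟨f, hf, bf, hfA⟩ := exists_continuous_abs_le_one_integral_abs_sub_indicator_le
    (μ := Λ ⊗ₘ κ) hA (div_pos hε four_pos)
  have bA (p : Ω × K) : |A.indicator (1 : Ω × K → ℝ) p| ≤ 1 := by
    by_cases hp : p ∈ A <;> simp [hp]
  have hclose (n : ℕ) : |a - a ^ 2 - correlationDefect Λ κ F φ n f| ≤ ε := by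
    rw [← correlationDefect_indicator_one hF hφ hinv hA hAinv n]
    refine (abs_correlationDefect_sub_le hF.toMeasurePreserving
      (measurePreserving_skewProduct hF.toMeasurePreserving hφ hinv)
      (measurable_one.indicator hA) hf.measurable bA bf n).trans ?_
    simp_rw [abs_sub_comm (A.indicator 1 _)]
    linarith
  have hlim := tendsto_correlationDefect_zero hF.measurable hφ hf.measurable bf (hdecor f hf)
  simpa [Real.dist_eq] using le_of_tendsto' (hlim.const_sub (a - a ^ 2)).abs hclose

end SkewProductTopology

theorem skew_product_ergodic_general
    {Ω K : Type*} [MetricSpace Ω] [CompactSpace Ω] [MeasurableSpace Ω] [BorelSpace Ω]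
    [MetricSpace K] [CompactSpace K] [MeasurableSpace K] [BorelSpace K]
    (Λ : Measure Ω) [IsProbabilityMeasure Λ]
    (F : Ω → Ω) (hF : Ergodic F Λ)
    (κ : Kernel Ω K) [IsMarkovKernel κ]
    (φ : Ω × K → K) (hφ : Measurable φ)
    (hinv : ∀ᵐ ω ∂Λ, Measure.map (fun x => φ (ω, x)) (κ ω) = κ (F ω))
    (α : Measure (Ω × K))
    (hα : ∀ B : Set (Ω × K), MeasurableSet B →
      α B = ∫⁻ ω, κ ω {x | (ω, x) ∈ B} ∂Λ)
    (hdecor : ∀ᵐ ω ∂Λ, ∀ h ψ : Ω × K → ℝ, Continuous h → Continuous ψ →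
      Tendsto (fun n : ℕ =>
        (∫ x, h ((fun p : Ω × K => (F p.1, φ p))^[n] (ω, x)) * ψ (ω, x) ∂(κ ω)) -
          (∫ y, h (F^[n] ω, y) ∂(κ (F^[n] ω))) * (∫ x, ψ (ω, x) ∂(κ ω)))
        atTop (nhds 0)) :
    Ergodic (fun p : Ω × K => (F p.1, φ p)) α := by
  obtain rfl : α = Λ ⊗ₘ κ := Measure.ext fun B hB => by
    rw [hα B hB, Measure.compProd_apply hB]
    rfl
  exact ⟨measurePreserving_skewProduct hF.toMeasurePreserving hφ hinv,
    preErgodic_of_forall_measureReal_eq_sq fun A hA hAinv =>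
      measureReal_eq_sq_of_preimage_skewProduct_eq hF hφ hinv
        (fun f hf => hdecor.mono fun ω hω => hω f f hf hf) hA hAinv⟩

/-- Ergodicity of the skew product measure `α`. `Ω` and `K` are compact metric spaces,
`F` preserves `Λ` and is ergodic, `κ` is a Markov kernel with the a.e. invariance
`φ(ω,·)_* μ_ω = μ_{F ω}`, `α(B) = ∫ μ_ω {x | (ω,x) ∈ B} dΛ(ω)` and
`τ(ω,x) = (F ω, φ(ω,x))`. Under the fiberwise decorrelation hypothesis,
`τ` is ergodic with respect to `α`. -/
theorem skew_product_ergodic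
    {Ω K : Type*} [MetricSpace Ω] [CompactSpace Ω] [MeasurableSpace Ω] [BorelSpace Ω]
    [MetricSpace K] [CompactSpace K] [MeasurableSpace K] [BorelSpace K]
    (Λ : Measure Ω) [IsProbabilityMeasure Λ]
    (F : Ω → Ω) (hF : Ergodic F Λ)
    (κ : Kernel Ω K) [IsMarkovKernel κ]
    (φ : Ω × K → K) (hφ : Measurable φ)
    (hinv : ∀ᵐ ω ∂Λ, Measure.map (fun x => φ (ω, x)) (κ ω) = κ (F ω))
    (α : Measure (Ω × K)) [IsProbabilityMeasure α]
    (hα : ∀ B : Set (Ω × K), MeasurableSet B →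
      α B = ∫⁻ ω, κ ω {x | (ω, x) ∈ B} ∂Λ)
    (hdecor : ∀ᵐ ω ∂Λ, ∀ h ψ : Ω × K → ℝ, Continuous h → Continuous ψ →
      Tendsto (fun n : ℕ =>
        (∫ x, h ((fun p : Ω × K => (F p.1, φ p))^[n] (ω, x)) * ψ (ω, x) ∂(κ ω)) -
          (∫ y, h (F^[n] ω, y) ∂(κ (F^[n] ω))) * (∫ x, ψ (ω, x) ∂(κ ω)))
        atTop (nhds 0)) :
    Ergodic (fun p : Ω × K => (F p.1, φ p)) α :=
  skew_product_ergodic_general Λ F hF κ φ hφ hinv α hα hdecor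
end
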